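/- Let M and N be matroids of ranks r and s on the ground set E such that every flat of N is a flat of M. For 0 ≤ i ≤ r − s define M_i by rank_{M_i}(A) = min{rank_N(A) + i, rank_M(A)}. Then each M_i is a matroid of rank s + i, M_0 = N, M_{r−s} = M, and for i ≤ j every flat of M_i is a flat of M_j. -/

import Mathlib

/-- A matroid given by its rank function on subsets of a finite ground set. -/
structure MatroidRank (α : Type) [DecidableEq α] [Fintype α] where
  r : Finset α → ℕ
  r_empty : r ∅ = 0
  r_le_insert : ∀ A x, r A ≤ r (insert x A)
  insert_le : ∀ A x, r (insert x A) ≤ r A + 1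
  r_local : ∀ A x y, r (insert x A) = r A → r (insert y A) = r A →
    r (insert x (insert y A)) = r A

variable {α : Type} [DecidableEq α] [Fintype α]

/-- `F` is a flat (closed set) of the matroid `M`. -/
def MatroidRank.IsFlat (M : MatroidRank α) (F : Finset α) : Prop :=
  ∀ x ∉ F, M.r F < M.r (insert x F)

/-- Closure of a set in the matroid `M`. -/
def MatroidRank.cl (M : MatroidRank α) (A : Finset α) : Finset α :=
  Finset.univ.filter (fun x => M.r (insert x A) = M.r A)

/-- The matroid `M` has no loops. -/
def MatroidRank.Loopfree (M : MatroidRank α) : Prop :=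
  ∀ x : α, M.r {x} = 1

/-!
The `N`-closure of `A` is an `N`-flat, hence an `M`-flat; so an element that does not raise the
`M`-rank of `A` lies in it and does not raise the `N`-rank either. Thus each single-element
increment of `N.r` is at most that of `M.r`, and `M.r - N.r` is monotone. For
`A ↦ min (N.r A + i) (M.r A)` this means: `x` does not raise its value at `A` iff `x` does not
raise `N.r` at `A` and, unless `N.r A + i ≤ M.r A`, does not raise `M.r` at `A` either; the local
axiom for the minimum then follows from that of `N` or of `M`. The same increment bound nests the
flats, and monotonicity of `M.r - N.r` along `A ⊆ univ` makes the top member equal to `M`.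
-/

namespace MatroidRank

section

variable (M : MatroidRank α)

lemma r_mono {A B : Finset α} (hAB : A ⊆ B) : M.r A ≤ M.r B := by
  obtain ⟨C, rfl⟩ : ∃ C, B = A ∪ C := ⟨B, (Finset.union_eq_right.mpr hAB).symm⟩
  induction C using Finset.induction_on with
  | empty => simp
  | insert y C _ ih =>
    rw [Finset.union_insert]
    exact (ih Finset.subset_union_left).trans (M.r_le_insert _ y)

lemma r_insert_insert_eq {A : Finset α} {x : α} (hx : M.r (insert x A) = M.r A) (y : α) :
    M.r (insert x (insert y A)) = M.r (insert y A) := by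
  have hyA := M.r_le_insert A y
  have hxyA := M.r_le_insert (insert y A) x
  by_cases hy : M.r (insert y A) = M.r A
  · have := M.r_local A x y hx hy
    omega
  · have h1 := M.insert_le A y
    have h2 := M.insert_le (insert x A) y
    rw [Finset.insert_comm] at h2
    omega

lemma r_insert_eq_of_subset {A B : Finset α} {x : α} (hx : M.r (insert x A) = M.r A)
    (hAB : A ⊆ B) : M.r (insert x B) = M.r B := by
  obtain ⟨C, rfl⟩ : ∃ C, B = A ∪ C := ⟨B, (Finset.union_eq_right.mpr hAB).symm⟩
  induction C using Finset.induction_on with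
  | empty => simpa using hx
  | insert y C _ ih =>
    rw [Finset.union_insert]
    exact M.r_insert_insert_eq (ih Finset.subset_union_left) y

lemma r_union_eq_of_forall_insert_eq {A C : Finset α}
    (h : ∀ c ∈ C, M.r (insert c A) = M.r A) : M.r (A ∪ C) = M.r A := by
  induction C using Finset.induction_on with
  | empty => simp
  | insert y C _ ih =>
    rw [Finset.union_insert,
      M.r_insert_eq_of_subset (h y (Finset.mem_insert_self y C)) Finset.subset_union_left]
    exact ih fun c hc => h c (Finset.mem_insert_of_mem hc)

lemma mem_cl {A : Finset α} {x : α} : x ∈ M.cl A ↔ M.r (insert x A) = M.r A := by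
  simp [cl]

lemma subset_cl (A : Finset α) : A ⊆ M.cl A := fun a ha => by
  rw [mem_cl, Finset.insert_eq_of_mem ha]

lemma r_cl (A : Finset α) : M.r (M.cl A) = M.r A := by
  have := M.r_union_eq_of_forall_insert_eq (C := M.cl A) fun c hc => M.mem_cl.mp hc
  rwa [Finset.union_eq_right.mpr (M.subset_cl A)] at this

lemma isFlat_cl (A : Finset α) : M.IsFlat (M.cl A) := by
  intro x hx
  have hxA : M.r (insert x A) ≠ M.r A := fun h => hx (M.mem_cl.mpr h)
  have h1 := M.r_le_insert A x
  have h2 := M.r_mono (Finset.insert_subset_insert x (M.subset_cl A))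
  rw [r_cl]
  omega

end

/-- `N` is a quotient of `M`. -/
def IsQuotient (N M : MatroidRank α) : Prop :=
  ∀ F, N.IsFlat F → M.IsFlat F

namespace IsQuotient

variable {N M : MatroidRank α} (h : N.IsQuotient M)
include h

lemma r_insert_eq {A : Finset α} {x : α} (hx : M.r (insert x A) = M.r A) :
    N.r (insert x A) = N.r A := by
  by_contra hxcl
  have hlt := h _ (N.isFlat_cl A) x (mt N.mem_cl.mp hxcl)
  have := M.r_insert_eq_of_subset hx (N.subset_cl A)
  omega

lemma r_insert_add_le (A : Finset α) (x : α) :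
    N.r (insert x A) + M.r A ≤ N.r A + M.r (insert x A) := by
  have := M.r_le_insert A x
  by_cases hx : M.r (insert x A) = M.r A
  · have := h.r_insert_eq hx
    omega
  · have := M.insert_le A x
    have := N.insert_le A x
    omega

lemma r_add_le_of_subset {A B : Finset α} (hAB : A ⊆ B) :
    N.r B + M.r A ≤ N.r A + M.r B := by
  obtain ⟨C, rfl⟩ : ∃ C, B = A ∪ C := ⟨B, (Finset.union_eq_right.mpr hAB).symm⟩
  induction C using Finset.induction_on with
  | empty => simp
  | insert y C _ ih =>
    rw [Finset.union_insert]
    have := ih Finset.subset_union_left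
    have := h.r_insert_add_le (A ∪ C) y
    omega

lemma r_le (A : Finset α) : N.r A ≤ M.r A := by
  simpa [N.r_empty, M.r_empty] using h.r_add_le_of_subset (Finset.empty_subset A)

lemma r_sub_le_r_univ_sub (A : Finset α) :
    M.r A - N.r A ≤ M.r Finset.univ - N.r Finset.univ := by
  have := h.r_add_le_of_subset (Finset.subset_univ A)
  omega

lemma r_insert_eq_of_min_eq {A : Finset α} {x : α} {i : ℕ}
    (hx : min (N.r (insert x A) + i) (M.r (insert x A)) = min (N.r A + i) (M.r A)) :
    N.r (insert x A) = N.r A ∧ (N.r A + i ≤ M.r A ∨ M.r (insert x A) = M.r A) := by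
  have := h.r_insert_add_le A x
  have := N.r_le_insert A x
  have := M.insert_le A x
  omega

/-- The matroid `M_i` between `N` and `M`. -/
def intermediate (i : ℕ) : MatroidRank α where
  r A := min (N.r A + i) (M.r A)
  r_empty := by simp [N.r_empty, M.r_empty]
  r_le_insert A x := by
    have := N.r_le_insert A x
    have := M.r_le_insert A x
    omega
  insert_le A x := by
    have := N.insert_le A x
    have := M.insert_le A x
    omega
  r_local A x y hx hy := by
    obtain ⟨hNx, hx⟩ := h.r_insert_eq_of_min_eq hx
    obtain ⟨hNy, hy⟩ := h.r_insert_eq_of_min_eq hy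
    have := N.r_le_insert (insert y A) x
    have := M.r_le_insert (insert y A) x
    have := N.r_le_insert A y
    have := M.r_le_insert A y
    by_cases hA : N.r A + i ≤ M.r A
    · have := N.r_local A x y hNx hNy
      omega
    · have := M.r_local A x y (hx.resolve_left hA) (hy.resolve_left hA)
      omega

lemma isFlat_intermediate_mono {i j : ℕ} (hij : i ≤ j) {F : Finset α}
    (hF : (h.intermediate i).IsFlat F) : (h.intermediate j).IsFlat F := by
  intro x hx
  have := hF x hx
  have := h.r_insert_add_le F x
  have := N.r_le_insert F x
  have := M.insert_le F x
  simp only [intermediate] at *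
  omega

end IsQuotient

end MatroidRank

/-- The intermediate matroids M_i with rank function
min{rank_N(A)+i, rank_M(A)}: each is a matroid of rank s+i, M_0 = N,
M_{r−s} = M, and for i ≤ j every flat of M_i is a flat of M_j. -/
theorem intermediate_matroids (M N : MatroidRank α)
    (hflats : ∀ F, N.IsFlat F → M.IsFlat F) :
    (∀ i, i ≤ M.r Finset.univ - N.r Finset.univ →
      ∃ Mi : MatroidRank α, ∀ A, Mi.r A = min (N.r A + i) (M.r A)) ∧
    (∀ i, i ≤ M.r Finset.univ - N.r Finset.univ →
      min (N.r Finset.univ + i) (M.r Finset.univ) = N.r Finset.univ + i) ∧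
    (∀ A, min (N.r A + 0) (M.r A) = N.r A) ∧
    (∀ A, min (N.r A + (M.r Finset.univ - N.r Finset.univ)) (M.r A) = M.r A) ∧
    (∀ i j, i ≤ j → j ≤ M.r Finset.univ - N.r Finset.univ →
      ∀ F : Finset α,
        (∀ x ∉ F, min (N.r F + i) (M.r F) < min (N.r (insert x F) + i) (M.r (insert x F))) →
        (∀ x ∉ F, min (N.r F + j) (M.r F) < min (N.r (insert x F) + j) (M.r (insert x F)))) := by
  have hq : N.IsQuotient M := hflats
  refine ⟨fun i _ => ⟨hq.intermediate i, fun _ => rfl⟩, fun i hi => ?_, fun A => ?_, fun A => ?_,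
    fun i j hij _ F => hq.isFlat_intermediate_mono hij⟩
  · have := hq.r_le Finset.univ
    omega
  · have := hq.r_le A
    omega
  · have := hq.r_sub_le_r_univ_sub A
    omega
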